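/- Let (A, R) be a Rota–Baxter algebra of weight 1 over a field K of characteristic zero, regard A as a Lie algebra under the commutator [x, y] = xy − yx, let U(A) be its universal enveloping algebra with canonical embedding ι : A → U(A), and for x ∈ A define the Grossman–Larson powers x^{∗0} := 1 and x^{∗(n+1)} := ι(x)·x^{∗n} + ι(R(x))·x^{∗n} − x^{∗n}·ι(R(x)) in U(A). Then in the formal power series ring U(A)⟦t⟧ the identity exp^{∗}(tx) = exp(−t·ι(R̃(x)))·exp(−t·ι(R(x))) holds, i.e., Σ_{n≥0} (tⁿ/n!)·x^{∗n} = ( Σ_{n≥0} tⁿ·ι(x + R(x))ⁿ/n! )·( Σ_{n≥0} tⁿ·(−ι(R(x)))ⁿ/n! ), where R̃ := −id_A − R so that −R̃(x) = x + R(x). -/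

import Mathlib

attribute [local instance 100] LieRing.ofAssociativeRing

/-- Regard the ring `A` as a Lie algebra under the commutator; `ι` is the canonical embedding
into the universal enveloping algebra. -/
noncomputable abbrev ueι (K : Type*) {A : Type*} [Field K] [Ring A] [Algebra K A] :
    A →ₗ⁅K⁆ UniversalEnvelopingAlgebra K A :=
  UniversalEnvelopingAlgebra.ι K

/-- The `n`-th Grossman–Larson power `x^{∗n}` of `x ∈ A` in `U(A)`, for the post-Lie structure
`x ▷ y = [R x, y]` of a weight-one Rota–Baxter algebra `(A, R)`:
`x^{∗0} = 1`, `x^{∗(n+1)} = x ∗ x^{∗n} = ι x · x^{∗n} + ι (R x) · x^{∗n} - x^{∗n} · ι (R x)`. -/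
noncomputable def glPow {K A : Type*} [Field K] [CharZero K] [Ring A] [Algebra K A]
    (R : A →ₗ[K] A) (x : A) : ℕ → UniversalEnvelopingAlgebra K A
  | 0 => 1
  | n + 1 =>
      ueι K x * glPow R x n + ueι K (R x) * glPow R x n - glPow R x n * ueι K (R x)

/-- The formal derivative `d/dt` on `S⟦t⟧` (coefficientwise, valid over a noncommutative
ring). -/
noncomputable def psDeriv {S : Type*} [Ring S] (f : PowerSeries S) : PowerSeries S :=
  PowerSeries.mk fun n => (n + 1 : ℕ) • PowerSeries.coeff (n + 1) f

/-- The power series `exp(t·u) = Σ_{n≥0} tⁿ·uⁿ/n!` in `S⟦t⟧`, for `u` in a `K`-algebra `S`. -/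
noncomputable def expSeries (K : Type*) {S : Type*} [Field K] [CharZero K] [Ring S]
    [Algebra K S] (u : S) : PowerSeries S :=
  PowerSeries.mk fun n => ((n.factorial : K)⁻¹) • u ^ n

/-! With `a = ι (x + R x)` and `b = -ι (R x)` the recursion reads `x^{∗(n+1)} = a x^{∗n} + x^{∗n} b`,
so `x^{∗n} = (L_a + R_b)ⁿ 1` for the left and right multiplications `L_a`, `R_b`. These commute,
hence the binomial theorem gives `x^{∗n} = Σ C(n,k) aᵏ bⁿ⁻ᵏ`, which is `n!` times the `n`-th
coefficient of `exp(ta) exp(tb)`. -/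

open Finset PowerSeries
open scoped Nat

theorem eq_sum_antidiagonal_of_succ_eq {S : Type*} [Semiring S] (a b : S) {f : ℕ → S}
    (h0 : f 0 = 1) (hsucc : ∀ n, f (n + 1) = a * f n + f n * b) (n : ℕ) :
    f n = ∑ p ∈ antidiagonal n, n.choose p.1 • (a ^ p.1 * b ^ p.2) := by
  have hpow : f n = ((LinearMap.mulLeft ℕ a + LinearMap.mulRight ℕ b) ^ n) 1 := by
    induction n with
    | zero => simp [h0]
    | succ n ih => rw [hsucc, pow_succ', Module.End.mul_apply, ← ih]; rfl
  rw [hpow, (LinearMap.commute_mulLeft_right a b).add_pow', LinearMap.sum_apply]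
  refine sum_congr rfl fun p _ => ?_
  simp [LinearMap.pow_mulLeft, LinearMap.pow_mulRight]

theorem coeff_expSeries_mul_expSeries {K S : Type*} [Field K] [CharZero K] [Ring S]
    [Algebra K S] (a b : S) (n : ℕ) :
    coeff n (expSeries K a * expSeries K b) =
      (n ! : K)⁻¹ • ∑ p ∈ antidiagonal n, n.choose p.1 • (a ^ p.1 * b ^ p.2) := by
  rw [coeff_mul, smul_sum]
  refine sum_congr rfl fun p hp => ?_
  obtain rfl : p.1 + p.2 = n := mem_antidiagonal.mp hp
  rw [expSeries, expSeries, coeff_mk, coeff_mk, smul_mul_smul_comm, ← Nat.cast_smul_eq_nsmul K,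
    smul_smul, Nat.cast_add_choose]
  have : ((p.1 + p.2)! : K) ≠ 0 := Nat.cast_ne_zero.mpr (Nat.factorial_ne_zero _)
  congr 1
  field_simp

theorem glPow_succ_eq {K A : Type*} [Field K] [CharZero K] [Ring A] [Algebra K A]
    (R : A →ₗ[K] A) (x : A) (n : ℕ) :
    glPow R x (n + 1) = ueι K (x + R x) * glPow R x n + glPow R x n * -ueι K (R x) := by
  rw [glPow, map_add]
  noncomm_ring

theorem gl_exponential_factorization_general {K A : Type*} [Field K] [CharZero K]
    [Ring A] [Algebra K A] (R : A →ₗ[K] A) (x : A) :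
    (PowerSeries.mk fun n => ((n.factorial : K)⁻¹) • glPow R x n) =
      expSeries K (ueι K (x + R x)) * expSeries K (-(ueι K (R x))) := by
  ext n
  rw [coeff_mk, coeff_expSeries_mul_expSeries,
    eq_sum_antidiagonal_of_succ_eq _ _ rfl (glPow_succ_eq R x) n]

/-- For a Rota–Baxter algebra `(A, R)` of weight `1` over a field `K` of
characteristic zero, with `R̃ := -id - R` (so `-R̃ x = x + R x`), one has in `U(A)⟦t⟧` the
identity `exp^{∗}(tx) = exp(-t·ι(R̃ x)) · exp(-t·ι(R x))`, i.e.,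
`Σ_{n≥0} (tⁿ/n!) x^{∗n} = (Σ tⁿ ι(x + R x)ⁿ/n!) · (Σ tⁿ (-ι(R x))ⁿ/n!)`. -/
theorem gl_exponential_factorization {K A : Type*} [Field K] [CharZero K]
    [Ring A] [Algebra K A] (R : A →ₗ[K] A)
    (hRB : ∀ x y : A, R x * R y = R (R x * y + x * R y + x * y)) (x : A) :
    (PowerSeries.mk fun n => ((n.factorial : K)⁻¹) • glPow R x n) =
      expSeries K (ueι K (x + R x)) * expSeries K (-(ueι K (R x))) :=
  gl_exponential_factorization_general R x
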